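/- arXiv:1412.1648 — 2 statements merged into one kernel-verified Lean document; each statement's English description precedes it below -/
import Mathlib

section
/- Let G be a countable subgroup of (ℝ,+). Then there exists an uncountable set A ⊆ (0,∞) such that the family of subgroups {aG}_{a∈A} of ℝ is independent, i.e., whenever a_1,…,a_n ∈ A are distinct and g_1,…,g_n ∈ G satisfy a_1 g_1 + ⋯ + a_n g_n = 0, then a_i g_i = 0 for all i. -/
/-!
Let `K` be the subfield of `ℝ` generated by `G`; it is countable, so a basis of `ℝ` over `K`
is uncountable. Changing the signs of the basis vectors (by the units `±1 ∈ K`) makes them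
positive without losing linear independence. A relation `∑ aᵢ gᵢ = 0` between distinct basis
elements with `gᵢ ∈ G ⊆ K` is a `K`-linear relation, so every `gᵢ` vanishes.
-/

/-- The family of subgroups `{aG}_{a∈A}` of `(ℝ, +)` is independent: whenever
`a₁,…,aₙ ∈ A` are distinct and `g₁,…,gₙ ∈ G` with `∑ aᵢgᵢ = 0`, each `aᵢgᵢ = 0`. -/
def IndepDilates (G : AddSubgroup ℝ) (A : Set ℝ) : Prop :=
  ∀ (n : ℕ) (a g : Fin n → ℝ), (∀ i, a i ∈ A) → Function.Injective a →
    (∀ i, g i ∈ G) → (∑ i, a i * g i) = 0 → ∀ i, a i * g i = 0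

theorem Subfield.countable_closure {K : Type*} [DivisionRing K] {s : Set K} (hs : s.Countable) :
    Countable (Subfield.closure s) := by
  have : Countable s := hs.to_subtype
  rw [← Cardinal.mk_le_aleph0_iff]
  exact (cardinalMk_closure_le_max s).trans (max_le Cardinal.mk_le_aleph0 le_rfl)

theorem Module.Basis.uncountable_index {ι K V : Type*} [Semiring K] [AddCommMonoid V]
    [Module K V] [Countable K] [Uncountable V] (b : Module.Basis ι K V) : Uncountable ι := by
  by_contra h
  have : Countable ι := not_uncountable_iff.mp h
  exact not_countable b.repr.injective.countable

theorem Subfield.exists_uncountable_linearIndepOn_pos (K : Subfield ℝ) [Countable K] :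
    ∃ A : Set ℝ, A ⊆ Set.Ioi 0 ∧ ¬ A.Countable ∧ LinearIndepOn K id A := by
  set b := Module.Basis.ofVectorSpace K ℝ
  have : Uncountable (Module.Basis.ofVectorSpaceIndex K ℝ) := b.uncountable_index
  have habs : LinearIndependent K fun i => |b i| := by
    have hsign : (fun i => |b i|) = (fun i => if 0 ≤ b i then (1 : Kˣ) else -1) • ⇑b := by
      funext i
      by_cases h : 0 ≤ b i <;> simp [h, abs_of_nonneg, abs_of_neg, not_le.mp]
    rw [hsign]
    exact b.linearIndependent.units_smul _
  refine ⟨Set.range fun i => |b i|, ?_, ?_, (linearIndepOn_id_range_iff habs.injective).mpr habs⟩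
  · rintro _ ⟨i, rfl⟩
    exact abs_pos.mpr (b.ne_zero i)
  · intro hc
    have := hc.to_subtype
    exact not_countable (Set.rangeFactorization_injective.mpr habs.injective).countable

theorem indepDilates_of_linearIndepOn {G : AddSubgroup ℝ} {A : Set ℝ} {K : Subfield ℝ}
    (hA : LinearIndepOn K id A) (hGK : (G : Set ℝ) ⊆ K) : IndepDilates G A := by
  intro n a g ha ha_inj hg hsum i
  have hli : LinearIndependent K a :=
    (linearIndepOn_id_range_iff ha_inj).mp (hA.mono (Set.range_subset_iff.mpr ha))
  have hgi : (⟨g i, hGK (hg i)⟩ : K) = 0 :=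
    Fintype.linearIndependent_iff.mp hli (fun j => ⟨g j, hGK (hg j)⟩)
      (by simpa only [Subfield.smul_def, smul_eq_mul, mul_comm] using hsum) i
  rw [show g i = 0 from congrArg Subtype.val hgi, mul_zero]

/-- For any countable subgroup `G` of `(ℝ, +)` there is an
uncountable set `A ⊆ (0, ∞)` such that the family `{aG}_{a∈A}` is independent. -/
theorem exists_uncountable_indep_dilates (G : AddSubgroup ℝ)
    (hG : (G : Set ℝ).Countable) :
    ∃ A : Set ℝ, A ⊆ Set.Ioi (0 : ℝ) ∧ ¬ A.Countable ∧ IndepDilates G A := by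
  have := Subfield.countable_closure hG
  obtain ⟨A, hA_pos, hA_unc, hA_indep⟩ :=
    (Subfield.closure (G : Set ℝ)).exists_uncountable_linearIndepOn_pos
  exact ⟨A, hA_pos, hA_unc, indepDilates_of_linearIndepOn hA_indep Subfield.subset_closure⟩
end

section
/- Let G be a countable subgroup of (ℝ,+), let A ⊆ (0,∞) be a countable set such that {aG}_{a∈A} is independent, let Γ be the subgroup of ℝ generated by ⋃_{a∈A} aG, and let B = {γ/g : γ ∈ Γ, g ∈ G, g ≠ 0}. Then for any a ∈ (0,∞) \ B, the family {aG} ∪ {a'G}_{a'∈A} is independent. -/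
/-- Let `G` be a countable subgroup of `(ℝ,+)`, `A ⊆ (0,∞)`
countable with `{aG}_{a∈A}` independent, `Γ` the subgroup generated by
`⋃_{a∈A} aG`, and `B = {γ/g : γ ∈ Γ, g ∈ G, g ≠ 0}`. Then for any
`a ∈ (0,∞) \ B`, the family `{aG} ∪ {a'G}_{a'∈A}` is independent. -/
theorem indep_dilates_extend (G : AddSubgroup ℝ) (hG : (G : Set ℝ).Countable)
    (A : Set ℝ) (hA : A ⊆ Set.Ioi (0 : ℝ)) (hAc : A.Countable)
    (hInd : IndepDilates G A)
    (Γ : AddSubgroup ℝ)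
    (hΓ : Γ = AddSubgroup.closure (⋃ a ∈ A, (fun g : ℝ => a * g) '' (G : Set ℝ)))
    (B : Set ℝ)
    (hB : B = {b : ℝ | ∃ γ ∈ Γ, ∃ g ∈ G, g ≠ 0 ∧ b = γ / g})
    (a : ℝ) (ha : a ∈ Set.Ioi (0 : ℝ) \ B) :
    IndepDilates G (insert a A) := by
  intro n a' g ha' hinj hg hsum
  by_cases hall : ∀ i, a' i ∈ A
  · exact hInd n a' g hall hinj hg hsum
  push_neg at hall
  obtain ⟨i0, hi0⟩ := hall
  have hai0 : a' i0 = a := by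
    rcases ha' i0 with h | h
    · exact h
    · exact absurd h hi0
  have hmemA : ∀ i, i ≠ i0 → a' i ∈ A := by
    intro i hi
    rcases ha' i with h | h
    · exact absurd (hinj (h.trans hai0.symm)) hi
    · exact h
  -- n = m + 1
  obtain ⟨m, rfl⟩ : ∃ m, n = m + 1 := ⟨n - 1, (Nat.succ_pred_eq_of_pos (Fin.pos i0)).symm⟩
  have hsplit : a' i0 * g i0 + ∑ j : Fin m, a' (i0.succAbove j) * g (i0.succAbove j) = 0 := by
    rw [Fin.sum_univ_succAbove (fun i => a' i * g i) i0] at hsum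
    exact hsum
  have hmemΓ : ∀ j : Fin m, a' (i0.succAbove j) * g (i0.succAbove j) ∈ Γ := by
    intro j
    rw [hΓ]
    apply AddSubgroup.subset_closure
    exact Set.mem_biUnion (hmemA _ (Fin.succAbove_ne i0 j)) ⟨g _, hg _, rfl⟩
  by_cases hg0 : g i0 = 0
  · -- the a-term vanishes; apply independence over A
    have hsum' : ∑ j : Fin m, a' (i0.succAbove j) * g (i0.succAbove j) = 0 := by
      simpa [hg0] using hsplit
    have key := hInd m (a' ∘ i0.succAbove) (g ∘ i0.succAbove)
      (fun j => hmemA _ (Fin.succAbove_ne i0 j))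
      (hinj.comp (Fin.succAbove_right_injective))
      (fun j => hg _) hsum'
    intro i
    rcases eq_or_ne i i0 with rfl | hne
    · simp [hg0]
    · obtain ⟨j, hj⟩ := Fin.exists_succAbove_eq hne
      rw [← hj]; exact key j
  · -- a * g i0 ∈ Γ, so a ∈ B, contradiction
    exfalso
    have h1 : a * g i0 ∈ Γ := by
      have : a * g i0 = -∑ j : Fin m, a' (i0.succAbove j) * g (i0.succAbove j) := by
        rw [← hai0]; linarith [hsplit]
      rw [this]
      exact neg_mem (sum_mem fun j _ => hmemΓ j)
    have : a ∈ B := by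
      rw [hB]
      exact ⟨a * g i0, h1, g i0, hg i0, hg0, by field_simp⟩
    exact ha.2 this
end
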